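/- Let J be a joint distribution of (p1, p2, y) in [0,1] × [0,1] × {0,1}, with marginal distributions D1 of (p1, y) and D2 of (p2, y). Then for every positive integer m, |SCDL_m(D1) - SCDL_m(D2)| ≤ C·m·E_J[|p1 - p2|] for an absolute constant C. -/

import Mathlib

open Finset

/-- Triangular weight function `w_i(x) = max(1 - |m·x - i|, 0)`. -/
noncomputable def tri (m i : ℕ) (x : ℝ) : ℝ := max (1 - |(m : ℝ) * x - (i : ℝ)|) 0

/-- Bin weight `π_i = E[w_i(p)]` for a finitely supported distribution given by
a finite set `J` of atoms with probabilities `ν` and prediction map `p`. -/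
noncomputable def binW {α : Type*} (m : ℕ) (J : Finset α) (ν : α → ℝ) (p : α → ℝ)
    (i : ℕ) : ℝ :=
  ∑ z ∈ J, ν z * tri m i (p z)

/-- Bin conditional mean `q_i = E[w_i(p)·y] / π_i` (zero if `π_i = 0`, by the
convention of division by zero). -/
noncomputable def binQ {α : Type*} (m : ℕ) (J : Finset α) (ν : α → ℝ) (p y : α → ℝ)
    (i : ℕ) : ℝ :=
  (∑ z ∈ J, ν z * tri m i (p z) * y z) / binW m J ν p i

/-- Soft-binned calibration fixed decision loss at index `i`:
`Σ_{j≤i} π_j·max(q_j - (i+1)/m, 0) + Σ_{j>i} π_j·max(i/m - q_j, 0)`. -/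
noncomputable def SCFDL {α : Type*} (m : ℕ) (J : Finset α) (ν : α → ℝ) (p y : α → ℝ)
    (i : ℕ) : ℝ :=
  ∑ j ∈ Finset.range (i + 1), binW m J ν p j * max (binQ m J ν p y j - ((i : ℝ) + 1) / m) 0
    + ∑ j ∈ Finset.Icc (i + 1) m, binW m J ν p j * max ((i : ℝ) / m - binQ m J ν p y j) 0

/-- `SCDL_m(D) = max_{i=0,...,m} SCFDL_{m,i}(D)`. -/
noncomputable def SCDLm {α : Type*} (m : ℕ) (J : Finset α) (ν : α → ℝ) (p y : α → ℝ) : ℝ :=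
  Finset.sup' (Finset.range (m + 1)) (Finset.nonempty_range_iff.mpr (Nat.succ_ne_zero m))
    (SCFDL m J ν p y)

/-- `SCDL(D) = inf over m ∈ {2,4,8,...} of max(SCDL_m(D), 1/m)`. -/
noncomputable def SCDL {α : Type*} (J : Finset α) (ν : α → ℝ) (p y : α → ℝ) : ℝ :=
  ⨅ k : ℕ, max (SCDLm (2 ^ (k + 1)) J ν p y) (1 / 2 ^ (k + 1))

/-!
Clearing the denominators `π_j` writes each bin term as `max(N_j - c·π_j, 0)` or
`max(c·π_j - N_j, 0)` with `N_j = E[w_j(p)·y]` and `0 ≤ c ≤ 2`, a 3-Lipschitz function of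
`(N_j, π_j)`. Both `N_j` and `π_j` move by at most `E|w_j(p₁) - w_j(p₂)|` under the coupling,
and summing over `j` costs at most `4m·E|p₁ - p₂|`, because each `w_j` is `m`-Lipschitz and
only the four bins around `m·p₁` and `m·p₂` contribute. Taking the maximum over `i`
preserves the bound.
-/

lemma Finset.abs_sup'_sub_sup'_le {ι M : Type*} [AddCommGroup M] [LinearOrder M]
    [IsOrderedAddMonoid M] {s : Finset ι} (H : s.Nonempty) {f g : ι → M} {C : M}
    (h : ∀ i ∈ s, |f i - g i| ≤ C) : |s.sup' H f - s.sup' H g| ≤ C := by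
  rw [abs_sub_le_iff, sub_le_iff_le_add, sub_le_iff_le_add]
  constructor
  · refine Finset.sup'_le H f fun i hi => ?_
    calc f i ≤ C + g i := sub_le_iff_le_add.mp (abs_sub_le_iff.mp (h i hi)).1
      _ ≤ C + s.sup' H g := by gcongr; exact Finset.le_sup' g hi
  · refine Finset.sup'_le H g fun i hi => ?_
    calc g i ≤ C + f i := sub_le_iff_le_add.mp (abs_sub_le_iff.mp (h i hi)).2
      _ ≤ C + s.sup' H f := by gcongr; exact Finset.le_sup' f hi

section Tri

variable (m : ℕ)

lemma tri_nonneg (i : ℕ) (x : ℝ) : 0 ≤ tri m i x := le_max_right _ _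

lemma abs_tri_sub_tri_le (i : ℕ) (a b : ℝ) : |tri m i a - tri m i b| ≤ m * |a - b| :=
  calc |tri m i a - tri m i b|
      ≤ |(1 - |(m : ℝ) * a - i|) - (1 - |(m : ℝ) * b - i|)| := abs_max_sub_max_le_abs _ _ _
    _ = |(|(m : ℝ) * b - i| - |(m : ℝ) * a - i|)| := by ring_nf
    _ ≤ |((m : ℝ) * b - i) - ((m : ℝ) * a - i)| := abs_abs_sub_abs_le_abs_sub _ _
    _ = m * |a - b| := by
      rw [show ((m : ℝ) * b - i) - ((m : ℝ) * a - i) = m * (b - a) by ring, abs_mul,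
        Nat.abs_cast, abs_sub_comm]

lemma mem_of_tri_ne_zero {j : ℕ} {x : ℝ} (h : tri m j x ≠ 0) :
    j ∈ ({⌊(m : ℝ) * x⌋₊, ⌊(m : ℝ) * x⌋₊ + 1} : Finset ℕ) := by
  set t := (m : ℝ) * x
  have hjt : |t - j| < 1 := by
    by_contra! hle
    exact h (max_eq_right (by linarith))
  rw [abs_lt] at hjt
  have hfloor_le : ⌊t⌋₊ ≤ j :=
    Nat.lt_succ_iff.mp ((Nat.floor_lt' j.succ_ne_zero).mpr (by push_cast; linarith))
  have hle_floor : j < ⌊t⌋₊ + 2 := by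
    have : (j : ℝ) < ⌊t⌋₊ + 2 := by linarith [Nat.lt_floor_add_one t]
    exact_mod_cast this
  simp only [Finset.mem_insert, Finset.mem_singleton]
  omega

lemma sum_abs_tri_sub_tri_le (s : Finset ℕ) (a b : ℝ) :
    ∑ j ∈ s, |tri m j a - tri m j b| ≤ 4 * m * |a - b| := by
  classical
  set T : Finset ℕ :=
    {⌊(m : ℝ) * a⌋₊, ⌊(m : ℝ) * a⌋₊ + 1} ∪ {⌊(m : ℝ) * b⌋₊, ⌊(m : ℝ) * b⌋₊ + 1}
  have hsub : {j ∈ s | |tri m j a - tri m j b| ≠ 0} ⊆ T := by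
    intro j hj
    have hne : tri m j a ≠ 0 ∨ tri m j b ≠ 0 := by
      by_contra! h
      simp [h.1, h.2] at hj
    rcases hne with h | h
    · exact Finset.mem_union_left _ (mem_of_tri_ne_zero m h)
    · exact Finset.mem_union_right _ (mem_of_tri_ne_zero m h)
  have hcard : (T.card : ℝ) ≤ 4 := by
    have : T.card ≤ 4 :=
      (Finset.card_union_le _ _).trans (add_le_add Finset.card_le_two Finset.card_le_two)
    exact_mod_cast this
  calc ∑ j ∈ s, |tri m j a - tri m j b|
      = ∑ j ∈ s with |tri m j a - tri m j b| ≠ 0, |tri m j a - tri m j b| :=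
        (Finset.sum_filter_ne_zero s).symm
    _ ≤ ∑ j ∈ T, |tri m j a - tri m j b| :=
        Finset.sum_le_sum_of_subset_of_nonneg hsub fun _ _ _ => abs_nonneg _
    _ ≤ T.card • ((m : ℝ) * |a - b|) :=
        Finset.sum_le_card_nsmul _ _ _ fun j _ => abs_tri_sub_tri_le m j a b
    _ ≤ 4 * m * |a - b| := by
      rw [nsmul_eq_mul, mul_assoc]
      exact mul_le_mul_of_nonneg_right hcard (by positivity)

end Tri

section Bins

variable {α : Type*} (m : ℕ) (J : Finset α) (ν : α → ℝ)

noncomputable def binNum (p y : α → ℝ) (j : ℕ) : ℝ :=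
  ∑ z ∈ J, ν z * tri m j (p z) * y z

noncomputable def binDev (p₁ p₂ : α → ℝ) (j : ℕ) : ℝ :=
  ∑ z ∈ J, ν z * |tri m j (p₁ z) - tri m j (p₂ z)|

variable {m J ν}

lemma binW_nonneg (hν : ∀ z ∈ J, 0 ≤ ν z) (p : α → ℝ) (j : ℕ) : 0 ≤ binW m J ν p j :=
  Finset.sum_nonneg fun z hz => mul_nonneg (hν z hz) (tri_nonneg m j (p z))

lemma binW_mul_binQ (hν : ∀ z ∈ J, 0 ≤ ν z) (p y : α → ℝ) (j : ℕ) :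
    binW m J ν p j * binQ m J ν p y j = binNum m J ν p y j := by
  -- `π_j = 0` forces every term `ν z * w_j(p z)` to vanish, so `x / 0 = 0` does no harm
  refine mul_div_cancel_of_imp' fun hW => Finset.sum_eq_zero fun z hz => ?_
  have hterms := (Finset.sum_eq_zero_iff_of_nonneg
    fun z hz => mul_nonneg (hν z hz) (tri_nonneg m j (p z))).mp hW
  rw [hterms z hz, zero_mul]

lemma SCFDL_eq (hν : ∀ z ∈ J, 0 ≤ ν z) (p y : α → ℝ) (i : ℕ) :
    SCFDL m J ν p y i =
      ∑ j ∈ Finset.range (i + 1),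
          max (binNum m J ν p y j - ((i : ℝ) + 1) / m * binW m J ν p j) 0
        + ∑ j ∈ Finset.Icc (i + 1) m,
          max ((i : ℝ) / m * binW m J ν p j - binNum m J ν p y j) 0 := by
  unfold SCFDL
  congr 1 <;> refine Finset.sum_congr rfl fun j _ => ?_ <;>
    rw [mul_max_of_nonneg _ _ (binW_nonneg hν p j), mul_zero, mul_sub,
      binW_mul_binQ hν, mul_comm (binW m J ν p j)]

lemma abs_binW_sub_binW_le (hν : ∀ z ∈ J, 0 ≤ ν z) (p₁ p₂ : α → ℝ) (j : ℕ) :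
    |binW m J ν p₁ j - binW m J ν p₂ j| ≤ binDev m J ν p₁ p₂ j := by
  rw [binW, binW, ← Finset.sum_sub_distrib]
  refine (Finset.abs_sum_le_sum_abs _ _).trans (Finset.sum_le_sum fun z hz => ?_)
  rw [← mul_sub, abs_mul, abs_of_nonneg (hν z hz)]

lemma abs_binNum_sub_binNum_le (hν : ∀ z ∈ J, 0 ≤ ν z) {y : α → ℝ}
    (hy : ∀ z ∈ J, |y z| ≤ 1) (p₁ p₂ : α → ℝ) (j : ℕ) :
    |binNum m J ν p₁ y j - binNum m J ν p₂ y j| ≤ binDev m J ν p₁ p₂ j := by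
  rw [binNum, binNum, ← Finset.sum_sub_distrib]
  refine (Finset.abs_sum_le_sum_abs _ _).trans (Finset.sum_le_sum fun z hz => ?_)
  rw [← sub_mul, ← mul_sub, abs_mul, abs_mul, abs_of_nonneg (hν z hz)]
  exact mul_le_of_le_one_right (mul_nonneg (hν z hz) (abs_nonneg _)) (hy z hz)

lemma sum_binDev_le (hν : ∀ z ∈ J, 0 ≤ ν z) (p₁ p₂ : α → ℝ) (s : Finset ℕ) :
    ∑ j ∈ s, binDev m J ν p₁ p₂ j ≤ 4 * m * ∑ z ∈ J, ν z * |p₁ z - p₂ z| := by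
  simp only [binDev]
  rw [Finset.sum_comm, Finset.mul_sum]
  refine Finset.sum_le_sum fun z hz => ?_
  rw [← Finset.mul_sum, mul_left_comm]
  exact mul_le_mul_of_nonneg_left (sum_abs_tri_sub_tri_le m s _ _) (hν z hz)

end Bins

lemma abs_sub_mul_le {x y c δ : ℝ} (hx : |x| ≤ δ) (hy : |y| ≤ δ) (hc₀ : 0 ≤ c) (hc₂ : c ≤ 2) :
    |x - c * y| ≤ 3 * δ :=
  calc |x - c * y| ≤ |x| + c * |y| := by
        rw [← abs_of_nonneg hc₀, ← abs_mul, abs_of_nonneg hc₀]; exact abs_sub _ _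
    _ ≤ 3 * δ := by nlinarith [abs_nonneg y]

lemma abs_SCFDL_sub_SCFDL_le {α : Type*} {m : ℕ} {J : Finset α} {ν : α → ℝ}
    (hν : ∀ z ∈ J, 0 ≤ ν z) {y : α → ℝ} (hy : ∀ z ∈ J, |y z| ≤ 1) (hm : 0 < m)
    (p₁ p₂ : α → ℝ) {i : ℕ} (hi : i ≤ m) :
    |SCFDL m J ν p₁ y i - SCFDL m J ν p₂ y i|
      ≤ 3 * ∑ j ∈ Finset.range (m + 1), binDev m J ν p₁ p₂ j := by
  have hmR : (1 : ℝ) ≤ m := by exact_mod_cast hm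
  have hiR : (i : ℝ) ≤ m := by exact_mod_cast hi
  have hc : ∀ c : ℝ, 0 ≤ c → c ≤ m + 1 → 0 ≤ c / m ∧ c / m ≤ 2 := fun c h₀ h₁ =>
    ⟨by positivity, by rw [div_le_iff₀ (by linarith)]; linarith⟩
  obtain ⟨hlo₀, hlo₂⟩ := hc ((i : ℝ) + 1) (by positivity) (by linarith)
  obtain ⟨hhi₀, hhi₂⟩ := hc i (by positivity) (by linarith)
  have hW := abs_binW_sub_binW_le hν p₁ p₂ (m := m)
  have hN := abs_binNum_sub_binNum_le hν hy p₁ p₂ (m := m)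
  have hsplit : Finset.range (m + 1) = Finset.range (i + 1) ∪ Finset.Icc (i + 1) m := by
    ext j; simp only [Finset.mem_range, Finset.mem_union, Finset.mem_Icc]; omega
  rw [hsplit, Finset.sum_union (Finset.disjoint_left.mpr fun j h₁ h₂ => by
    simp only [Finset.mem_range, Finset.mem_Icc] at h₁ h₂; omega), mul_add,
    SCFDL_eq hν, SCFDL_eq hν, add_sub_add_comm, ← Finset.sum_sub_distrib,
    ← Finset.sum_sub_distrib, Finset.mul_sum, Finset.mul_sum]
  refine (abs_add_le _ _).trans (add_le_add ?_ ?_) <;>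
    refine (Finset.abs_sum_le_sum_abs _ _).trans (Finset.sum_le_sum fun j _ => ?_) <;>
    refine (abs_max_sub_max_le_abs _ _ _).trans ?_
  · rw [show ∀ a b c d e : ℝ, (a - e * b) - (c - e * d) = (a - c) - e * (b - d) by
      intros; ring]
    exact abs_sub_mul_le (hN j) (hW j) hlo₀ hlo₂
  · rw [show ∀ a b c d e : ℝ, (e * b - a) - (e * d - c) = -((a - c) - e * (b - d)) by
      intros; ring, abs_neg]
    exact abs_sub_mul_le (hN j) (hW j) hhi₀ hhi₂

/-- Lipschitz continuity of `SCDL_m` in the predictions. For a joint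
(coupling) distribution `J` of `(p₁, p₂, y)` with marginals `D₁` of `(p₁, y)` and
`D₂` of `(p₂, y)`, `|SCDL_m(D₁) - SCDL_m(D₂)| ≤ C·m·E_J[|p₁ - p₂|]` for an absolute
constant `C`. -/
theorem SCDLm_lipschitz :
    ∃ C : ℝ, 0 < C ∧
      ∀ (α : Type) (J : Finset α) (ν : α → ℝ) (p₁ p₂ y : α → ℝ),
        (∀ z ∈ J, 0 ≤ ν z) → (∑ z ∈ J, ν z = 1) →
        (∀ z ∈ J, p₁ z ∈ Set.Icc (0:ℝ) 1 ∧ p₂ z ∈ Set.Icc (0:ℝ) 1 ∧ (y z = 0 ∨ y z = 1)) →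
        ∀ m : ℕ, 0 < m →
          |SCDLm m J ν p₁ y - SCDLm m J ν p₂ y| ≤ C * m * ∑ z ∈ J, ν z * |p₁ z - p₂ z| := by
  refine ⟨12, by norm_num, fun α J ν p₁ p₂ y hν _ hbd m hm => ?_⟩
  have hy : ∀ z ∈ J, |y z| ≤ 1 := fun z hz => by
    rcases (hbd z hz).2.2 with h | h <;> norm_num [h]
  refine Finset.abs_sup'_sub_sup'_le _ fun i hi => ?_
  calc |SCFDL m J ν p₁ y i - SCFDL m J ν p₂ y i|
      ≤ 3 * ∑ j ∈ Finset.range (m + 1), binDev m J ν p₁ p₂ j :=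
        abs_SCFDL_sub_SCFDL_le hν hy hm p₁ p₂ (Nat.lt_succ_iff.mp (Finset.mem_range.mp hi))
    _ ≤ 3 * (4 * m * ∑ z ∈ J, ν z * |p₁ z - p₂ z|) := by
        gcongr; exact sum_binDev_le hν p₁ p₂ _
    _ = 12 * m * ∑ z ∈ J, ν z * |p₁ z - p₂ z| := by ring
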